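/- arXiv:2604.19671 — 5 statements merged into one kernel-verified Lean document; each statement's English description precedes it below -/
import Mathlib

section
/- Let I be a bounded interval, ϖ > 0, and ρ₁, ρ₂ : I → ℝ be positive functions in the cone C(ϖ) (i.e. ρ(x)/ρ(y) ≤ exp(ϖ|x−y|^{1/3}) for all x,y) with ρ₁(x) > ρ₂(x) for all x ∈ I. Assume moreover that the supremum over I of ρ₂/(ρ₁−ρ₂) is finite, equal to S. Then the difference ρ₁ − ρ₂ belongs to the cone C(ϖ(1 + 2S)), i.e. (ρ₁−ρ₂)(x)/(ρ₁−ρ₂)(y) ≤ exp(ϖ(1+2S)|x−y|^{1/3}) for all x, y ∈ I. -/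
/-!
Write `a = ϖ|x - y|^{1/3}`. The cone conditions give `ρ₁ x ≤ e^a ρ₁ y` and `ρ₂ x ≥ e^{-a} ρ₂ y`, so
`(ρ₁ - ρ₂) x ≤ e^a (ρ₁ y - e^{-2a} ρ₂ y) = e^a ((ρ₁ - ρ₂) y + (1 - e^{-2a}) ρ₂ y)`.
Since `1 - e^{-2a} ≤ 2a` and `ρ₂ y ≤ S (ρ₁ - ρ₂) y`, this is at most
`e^a (1 + 2aS) (ρ₁ - ρ₂) y ≤ e^{a(1 + 2S)} (ρ₁ - ρ₂) y`.
-/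

open Real

theorem sub_le_exp_mul_sub {a S p q p' q' : ℝ} (ha : 0 ≤ a) (hq : 0 ≤ q) (hqp : q ≤ p)
    (hqS : q ≤ S * (p - q)) (hp' : p' ≤ exp a * p) (hq' : q ≤ exp a * q') :
    p' - q' ≤ exp (a * (1 + 2 * S)) * (p - q) := by
  have hexp_neg : exp (-a) = exp a * exp (-(2 * a)) := by rw [← exp_add]; ring_nf
  have hq'_lower : exp (-a) * q ≤ q' := by
    rw [exp_neg, inv_mul_le_iff₀ (exp_pos a)]
    exact hq'
  calc p' - q' ≤ exp a * p - exp (-a) * q := by linarith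
    _ = exp a * ((p - q) + (1 - exp (-(2 * a))) * q) := by rw [hexp_neg]; ring
    _ ≤ exp a * ((p - q) + 2 * a * q) := by
        gcongr
        linarith [one_sub_le_exp_neg (2 * a)]
    _ ≤ exp a * ((1 + 2 * a * S) * (p - q)) := by
        gcongr
        linarith [mul_le_mul_of_nonneg_left hqS (by positivity : (0 : ℝ) ≤ 2 * a)]
    _ ≤ exp a * (exp (2 * a * S) * (p - q)) := by
        gcongr
        linarith [add_one_le_exp (2 * a * S)]
    _ = exp (a * (1 + 2 * S)) * (p - q) := by rw [← mul_assoc, ← exp_add]; ring_nf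

theorem sub_div_sub_le_exp {a S p q p' q' : ℝ} (ha : 0 ≤ a) (hq : 0 < q) (hq' : 0 < q')
    (hqp : q < p) (hS : q / (p - q) ≤ S) (hp' : p' / p ≤ exp a) (hq'q : q / q' ≤ exp a) :
    (p' - q') / (p - q) ≤ exp (a * (1 + 2 * S)) := by
  have hpq : 0 < p - q := sub_pos.mpr hqp
  rw [div_le_iff₀ hpq]
  rw [div_le_iff₀ hpq] at hS
  rw [div_le_iff₀ (hq.trans hqp)] at hp'
  rw [div_le_iff₀ hq'] at hq'q
  exact sub_le_exp_mul_sub ha hq.le hqp.le hS (by linarith) (by linarith)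

theorem cone_of_difference_general
    (I : Set ℝ)
    (ϖ S : ℝ) (hϖ : 0 < ϖ) (ρ₁ ρ₂ : ℝ → ℝ)
    (hpos₂ : ∀ x ∈ I, 0 < ρ₂ x)
    (hcone₁ : ∀ x ∈ I, ∀ y ∈ I, ρ₁ x / ρ₁ y ≤ Real.exp (ϖ * |x - y| ^ ((1:ℝ)/3)))
    (hcone₂ : ∀ x ∈ I, ∀ y ∈ I, ρ₂ x / ρ₂ y ≤ Real.exp (ϖ * |x - y| ^ ((1:ℝ)/3)))
    (hgt : ∀ x ∈ I, ρ₂ x < ρ₁ x)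
    (hS : IsLUB ((fun x => ρ₂ x / (ρ₁ x - ρ₂ x)) '' I) S) :
    ∀ x ∈ I, ∀ y ∈ I,
      (ρ₁ x - ρ₂ x) / (ρ₁ y - ρ₂ y)
        ≤ Real.exp (ϖ * (1 + 2 * S) * |x - y| ^ ((1:ℝ)/3)) := by
  intro x hx y hy
  have ha : 0 ≤ ϖ * |x - y| ^ ((1:ℝ)/3) := by positivity
  have hcone₂' := hcone₂ y hy x hx
  rw [abs_sub_comm] at hcone₂'
  rw [mul_right_comm]
  exact sub_div_sub_le_exp ha (hpos₂ y hy) (hpos₂ x hx) (hgt y hy) (hS.1 ⟨y, hy, rfl⟩)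
    (hcone₁ x hx y hy) hcone₂'

/-- If `ρ₁, ρ₂` lie in the cone `C(ϖ)` on a bounded interval `I`,
with `ρ₁ > ρ₂` pointwise and `sup_I ρ₂/(ρ₁−ρ₂) = S` finite, then `ρ₁ − ρ₂` lies
in the cone `C(ϖ(1+2S))`. -/
theorem cone_of_difference
    (I : Set ℝ) (hIbdd : Bornology.IsBounded I) (hIconn : I.OrdConnected)
    (ϖ S : ℝ) (hϖ : 0 < ϖ) (ρ₁ ρ₂ : ℝ → ℝ)
    (hpos₁ : ∀ x ∈ I, 0 < ρ₁ x) (hpos₂ : ∀ x ∈ I, 0 < ρ₂ x)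
    (hcone₁ : ∀ x ∈ I, ∀ y ∈ I, ρ₁ x / ρ₁ y ≤ Real.exp (ϖ * |x - y| ^ ((1:ℝ)/3)))
    (hcone₂ : ∀ x ∈ I, ∀ y ∈ I, ρ₂ x / ρ₂ y ≤ Real.exp (ϖ * |x - y| ^ ((1:ℝ)/3)))
    (hgt : ∀ x ∈ I, ρ₂ x < ρ₁ x)
    (hS : IsLUB ((fun x => ρ₂ x / (ρ₁ x - ρ₂ x)) '' I) S) :
    ∀ x ∈ I, ∀ y ∈ I,
      (ρ₁ x - ρ₂ x) / (ρ₁ y - ρ₂ y)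
        ≤ Real.exp (ϖ * (1 + 2 * S) * |x - y| ^ ((1:ℝ)/3)) :=
  cone_of_difference_general I ϖ S hϖ ρ₁ ρ₂ hpos₂ hcone₁ hcone₂ hgt hS
end

section
/- Let Λ > 1, c > 0, τ_min, κ_min > 0 and suppose that for each k ∈ {0,…,n−1} we have real numbers τ_k ∈ [τ_min, τ_max], κ_k ∈ [κ_min, κ_max], angles φ_k ∈ (−π/2, π/2), and slopes s_k ≥ 0, and consider the product P_n = Π_{k=0}^{n−1} (τ_k κ_k + cos φ_k + τ_k s_k)/cos φ_{k+1} with the convention that the first factor uses cos φ_0 ≤ 1 in the numerator. Then P_n ≥ [τ_min·κ_min/(1 + τ_max·κ_max)]·(1 + τ_min·κ_min)^n; i.e. the n-step derivative of the induced expanding map along unstable curves grows at least geometrically with ratio Λ = 1 + τ_min·κ_min. -/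
private lemma n_step_aux
    (τmin κmin : ℝ) (hτmin : 0 < τmin) (hκmin : 0 < κmin)
    (τ κ s φ : ℕ → ℝ) :
    ∀ n : ℕ,
      (∀ k < n + 1, τmin ≤ τ k) → (∀ k < n + 1, κmin ≤ κ k) →
      (∀ k < n + 1, 0 ≤ s k) →
      (∀ k ≤ n + 1, 0 < Real.cos (φ k)) →
      τmin * κmin * (1 + τmin * κmin) ^ n
        ≤ Real.cos (φ (n + 1)) *
          ∏ k ∈ Finset.range (n + 1),
            (τ k * κ k + Real.cos (φ k) + τ k * s k) / Real.cos (φ (k + 1)) := by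
  intro n
  induction n with
  | zero =>
    intro hτ hκ hs hc
    have h0 : (0:ℕ) < 1 := Nat.zero_lt_one
    have hτ0 := hτ 0 h0
    have hκ0 := hκ 0 h0
    have hs0 := hs 0 h0
    have hc0 := hc 0 (by norm_num)
    have hc1 := hc 1 (by norm_num)
    have heq : Real.cos (φ (0+1)) * ∏ k ∈ Finset.range (0+1),
        (τ k * κ k + Real.cos (φ k) + τ k * s k) / Real.cos (φ (k + 1))
        = τ 0 * κ 0 + Real.cos (φ 0) + τ 0 * s 0 := by
      rw [Finset.prod_range_one]; field_simp
    rw [pow_zero, mul_one, heq]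
    have hts : 0 ≤ τ 0 * s 0 := mul_nonneg (le_trans hτmin.le hτ0) hs0
    nlinarith [mul_le_mul hτ0 hκ0 hκmin.le (le_trans hτmin.le hτ0)]
  | succ n ih =>
    intro hτ hκ hs hc
    have IH := ih (fun k hk => hτ k (by omega)) (fun k hk => hκ k (by omega))
      (fun k hk => hs k (by omega)) (fun k hk => hc k (by omega))
    have hcn1 : 0 < Real.cos (φ (n + 1)) := hc (n + 1) (by omega)
    have hcn2 : 0 < Real.cos (φ (n + 2)) := hc (n + 2) (by omega)
    have hτn := hτ (n + 1) (by omega)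
    have hκn := hκ (n + 1) (by omega)
    have hsn := hs (n + 1) (by omega)
    set P := ∏ k ∈ Finset.range (n + 1),
        (τ k * κ k + Real.cos (φ k) + τ k * s k) / Real.cos (φ (k + 1)) with hP
    have hPpos : 0 < P := by
      apply Finset.prod_pos
      intro k hk
      simp only [Finset.mem_range] at hk
      have h1 : 0 < Real.cos (φ k) := hc k (by omega)
      have h2 : 0 < Real.cos (φ (k + 1)) := hc (k + 1) (by omega)
      have h3 : 0 < τ k * κ k :=
        mul_pos (lt_of_lt_of_le hτmin (hτ k (by omega))) (lt_of_lt_of_le hκmin (hκ k (by omega)))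
      have h4 : 0 ≤ τ k * s k :=
        mul_nonneg (le_trans hτmin.le (hτ k (by omega))) (hs k (by omega))
      positivity
    rw [Finset.prod_range_succ]
    have key : Real.cos (φ (n + 2)) * (P * ((τ (n+1) * κ (n+1) + Real.cos (φ (n+1))
        + τ (n+1) * s (n+1)) / Real.cos (φ (n + 1 + 1))))
        = P * (τ (n+1) * κ (n+1) + Real.cos (φ (n+1)) + τ (n+1) * s (n+1)) := by
      field_simp
    rw [key]
    have hnum : (1 + τmin * κmin) * Real.cos (φ (n+1))
        ≤ τ (n+1) * κ (n+1) + Real.cos (φ (n+1)) + τ (n+1) * s (n+1) := by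
      have hcos1 : Real.cos (φ (n+1)) ≤ 1 := Real.cos_le_one _
      have h3 : τmin * κmin ≤ τ (n+1) * κ (n+1) :=
        mul_le_mul hτn hκn hκmin.le (le_trans hτmin.le hτn)
      have h4 : 0 ≤ τ (n+1) * s (n+1) := mul_nonneg (le_trans hτmin.le hτn) hsn
      nlinarith [mul_pos hτmin hκmin]
    calc τmin * κmin * (1 + τmin * κmin) ^ (n + 1)
        = (1 + τmin * κmin) * (τmin * κmin * (1 + τmin * κmin) ^ n) := by ring
      _ ≤ (1 + τmin * κmin) * (Real.cos (φ (n + 1)) * P) := by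
          apply mul_le_mul_of_nonneg_left IH
          nlinarith [mul_pos hτmin hκmin]
      _ = P * ((1 + τmin * κmin) * Real.cos (φ (n+1))) := by ring
      _ ≤ P * (τ (n+1) * κ (n+1) + Real.cos (φ (n+1)) + τ (n+1) * s (n+1)) :=
          mul_le_mul_of_nonneg_left hnum hPpos.le

/-- Uniform hyperbolic expansion: the `n`-step product
`Π_{k<n} (τ_k κ_k + cos φ_k + τ_k s_k)/cos φ_{k+1}` is bounded below by
`[τ_min κ_min/(1 + τ_max κ_max)] · (1 + τ_min κ_min)^n`. -/
theorem n_step_expansion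
    (n : ℕ) (τmin τmax κmin κmax : ℝ)
    (hτmin : 0 < τmin) (hκmin : 0 < κmin)
    (hτ' : τmin ≤ τmax) (hκ' : κmin ≤ κmax)
    (τ κ s φ : ℕ → ℝ)
    (hτ : ∀ k < n, τ k ∈ Set.Icc τmin τmax)
    (hκ : ∀ k < n, κ k ∈ Set.Icc κmin κmax)
    (hs : ∀ k < n, 0 ≤ s k)
    (hφ : ∀ k ≤ n, φ k ∈ Set.Ioo (-(Real.pi/2)) (Real.pi/2)) :
    τmin * κmin / (1 + τmax * κmax) * (1 + τmin * κmin) ^ n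
      ≤ ∏ k ∈ Finset.range n,
          (τ k * κ k + Real.cos (φ k) + τ k * s k) / Real.cos (φ (k+1)) := by
  have hmaxpos : 0 < 1 + τmax * κmax := by nlinarith
  have hmm : τmin * κmin ≤ τmax * κmax :=
    mul_le_mul hτ' hκ' hκmin.le (le_trans hτmin.le hτ')
  cases n with
  | zero =>
    simp only [pow_zero, mul_one, Finset.range_zero, Finset.prod_empty]
    rw [div_le_one hmaxpos]
    nlinarith
  | succ m =>
    have hcpos : ∀ k ≤ m + 1, 0 < Real.cos (φ k) := by
      intro k hk
      exact Real.cos_pos_of_mem_Ioo (by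
        have := hφ k hk
        constructor <;> [linarith [this.1]; linarith [this.2]])
    have aux := n_step_aux τmin κmin hτmin hκmin τ κ s φ m
      (fun k hk => (hτ k hk).1) (fun k hk => (hκ k hk).1)
      (fun k hk => hs k hk) hcpos
    have hcn : Real.cos (φ (m + 1)) ≤ 1 := Real.cos_le_one _
    have hcnp : 0 < Real.cos (φ (m + 1)) := hcpos (m + 1) le_rfl
    set P := ∏ k ∈ Finset.range (m + 1),
        (τ k * κ k + Real.cos (φ k) + τ k * s k) / Real.cos (φ (k + 1))
    have hP1 : τmin * κmin * (1 + τmin * κmin) ^ m ≤ P := by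
      calc τmin * κmin * (1 + τmin * κmin) ^ m ≤ Real.cos (φ (m + 1)) * P := aux
        _ ≤ 1 * P := by
            apply mul_le_mul_of_nonneg_right hcn
            have hΛpos : (0:ℝ) < τmin * κmin * (1 + τmin * κmin) ^ m := by positivity
            nlinarith
        _ = P := one_mul P
    -- now compare with the claimed bound
    have : τmin * κmin / (1 + τmax * κmax) * (1 + τmin * κmin) ^ (m + 1)
        ≤ τmin * κmin * (1 + τmin * κmin) ^ m := by
      rw [div_mul_eq_mul_div, div_le_iff₀ hmaxpos, pow_succ]
      have hpow : (0:ℝ) < (1 + τmin * κmin) ^ m := by positivity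
      have h1 : 1 + τmin * κmin ≤ 1 + τmax * κmax := by linarith
      have h2 := mul_le_mul_of_nonneg_left (mul_le_mul_of_nonneg_left h1 hpow.le)
        (mul_pos hτmin hκmin).le
      nlinarith [h2]
    linarith
end

section
/- Let L be an operator acting on positive functions ρ on intervals by (Lρ)(x) = ρ(g(x))·g'(x) for a C¹ map g with g' > 0 satisfying |ln g'(x) − ln g'(y)| ≤ Q₁|x−y|^{1/3} and |g(x) − g(y)| ≤ Λ₁^{−1}|x−y| for some Q₁ > 0 and Λ₁ > 1. If ρ is in the cone C(ϖ), i.e. ρ(u)/ρ(v) ≤ exp(ϖ|u−v|^{1/3}), then Lρ ∈ C(Λ₁^{−1/3}·ϖ + Q₁). In particular, for ϖ ≥ Q₁/(1 − Λ₁^{−1/3}), the cone C(ϖ) is invariant under L. -/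
/-!
Write `Lρ = (ρ ∘ g) · g'`. Since `g` contracts distances by `Λ₁⁻¹`, it contracts the
Hölder modulus `|x - y|^{1/3}` by `Λ₁^{-1/3}`, so `ρ ∘ g` lies in the cone of parameter
`Λ₁^{-1/3} ϖ`; the distortion bound on `log g'` puts `g'` in the cone of parameter `Q₁`;
and cone parameters add under pointwise products. Invariance is the fixed-point
inequality `Λ₁^{-1/3} ϖ + Q₁ ≤ ϖ`.
-/

open Real

/-- The cone `C(ϖ)` of log-`α`-Hölder densities on `J`. -/
def InHolderCone (J : Set ℝ) (α ϖ : ℝ) (ρ : ℝ → ℝ) : Prop :=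
  ∀ u ∈ J, ∀ v ∈ J, ρ u / ρ v ≤ exp (ϖ * |u - v| ^ α)

namespace InHolderCone

variable {I J : Set ℝ} {α ϖ : ℝ} {ρ : ℝ → ℝ}

theorem mono {ϖ' : ℝ} (hρ : InHolderCone J α ϖ ρ) (h : ϖ ≤ ϖ') : InHolderCone J α ϖ' ρ :=
  fun u hu v hv => (hρ u hu v hv).trans <|
    exp_le_exp.2 (mul_le_mul_of_nonneg_right h (rpow_nonneg (abs_nonneg _) _))

theorem of_abs_log_sub_le {Q : ℝ} (hpos : ∀ x ∈ I, 0 < ρ x)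
    (hlog : ∀ x ∈ I, ∀ y ∈ I, |log (ρ x) - log (ρ y)| ≤ Q * |x - y| ^ α) :
    InHolderCone I α Q ρ := by
  intro x hx y hy
  calc ρ x / ρ y = exp (log (ρ x) - log (ρ y)) := by
        rw [exp_sub, exp_log (hpos x hx), exp_log (hpos y hy)]
    _ ≤ exp (Q * |x - y| ^ α) := exp_le_exp.2 ((le_abs_self _).trans (hlog x hx y hy))

theorem comp {g : ℝ → ℝ} {K : ℝ} (hρ : InHolderCone J α ϖ ρ) (hα : 0 ≤ α) (hϖ : 0 ≤ ϖ)
    (hK : 0 ≤ K) (hmap : Set.MapsTo g I J)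
    (hlip : ∀ x ∈ I, ∀ y ∈ I, |g x - g y| ≤ K * |x - y|) :
    InHolderCone I α (K ^ α * ϖ) (ρ ∘ g) := by
  intro x hx y hy
  have hmod : |g x - g y| ^ α ≤ K ^ α * |x - y| ^ α := by
    rw [← mul_rpow hK (abs_nonneg _)]
    exact rpow_le_rpow (abs_nonneg _) (hlip x hx y hy) hα
  refine (hρ _ (hmap hx) _ (hmap hy)).trans (exp_le_exp.2 ?_)
  calc ϖ * |g x - g y| ^ α ≤ ϖ * (K ^ α * |x - y| ^ α) := mul_le_mul_of_nonneg_left hmod hϖ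
    _ = K ^ α * ϖ * |x - y| ^ α := by ring

theorem mul {σ : ℝ → ℝ} {ϖ' : ℝ} (hρ : InHolderCone J α ϖ ρ) (hσ : InHolderCone J α ϖ' σ)
    (hσpos : ∀ x ∈ J, 0 < σ x) :
    InHolderCone J α (ϖ + ϖ') (fun x => ρ x * σ x) := by
  intro u hu v hv
  calc ρ u * σ u / (ρ v * σ v) = ρ u / ρ v * (σ u / σ v) := mul_div_mul_comm _ _ _ _
    _ ≤ exp (ϖ * |u - v| ^ α) * exp (ϖ' * |u - v| ^ α) :=
        mul_le_mul (hρ u hu v hv) (hσ u hu v hv)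
          (div_pos (hσpos u hu) (hσpos v hv)).le (exp_nonneg _)
    _ = exp ((ϖ + ϖ') * |u - v| ^ α) := by rw [← exp_add, add_mul]

end InHolderCone

theorem add_le_of_div_one_sub_le {c Q ϖ : ℝ} (hc : c < 1) (h : Q / (1 - c) ≤ ϖ) :
    c * ϖ + Q ≤ ϖ := by
  rw [div_le_iff₀ (sub_pos.2 hc)] at h
  linarith

theorem transfer_operator_cone_contraction_general
    (I J : Set ℝ) (g : ℝ → ℝ) (Q₁ Λ₁ ϖ : ℝ)
    (hΛ : 1 < Λ₁) (hϖ : 0 < ϖ)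
    (hmap : Set.MapsTo g I J)
    (hdiff : ∀ x ∈ I, DifferentiableAt ℝ g x ∧ 0 < deriv g x)
    (hdist : ∀ x ∈ I, ∀ y ∈ I,
      |Real.log (deriv g x) - Real.log (deriv g y)| ≤ Q₁ * |x - y| ^ ((1:ℝ)/3))
    (hcontr : ∀ x ∈ I, ∀ y ∈ I, |g x - g y| ≤ Λ₁⁻¹ * |x - y|)
    (ρ : ℝ → ℝ)
    (hρ : ∀ u ∈ J, ∀ v ∈ J, ρ u / ρ v ≤ Real.exp (ϖ * |u - v| ^ ((1:ℝ)/3))) :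
    (∀ x ∈ I, ∀ y ∈ I,
        (ρ (g x) * deriv g x) / (ρ (g y) * deriv g y)
          ≤ Real.exp ((Λ₁ ^ (-(1:ℝ)/3) * ϖ + Q₁) * |x - y| ^ ((1:ℝ)/3))) ∧
      (Q₁ / (1 - Λ₁ ^ (-(1:ℝ)/3)) ≤ ϖ →
        ∀ x ∈ I, ∀ y ∈ I,
          (ρ (g x) * deriv g x) / (ρ (g y) * deriv g y)
            ≤ Real.exp (ϖ * |x - y| ^ ((1:ℝ)/3))) := by
  have hΛpos : 0 < Λ₁ := one_pos.trans hΛ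
  have hrate : Λ₁⁻¹ ^ ((1:ℝ)/3) = Λ₁ ^ (-(1:ℝ)/3) := by
    rw [inv_rpow hΛpos.le, ← rpow_neg hΛpos.le, neg_div]
  have hderiv_pos : ∀ x ∈ I, 0 < deriv g x := fun x hx => (hdiff x hx).2
  have hpull : InHolderCone I (1/3) (Λ₁ ^ (-(1:ℝ)/3) * ϖ) (ρ ∘ g) :=
    hrate ▸ InHolderCone.comp hρ (by norm_num) hϖ.le (inv_nonneg.2 hΛpos.le) hmap hcontr
  have hL : InHolderCone I (1/3) (Λ₁ ^ (-(1:ℝ)/3) * ϖ + Q₁) (fun x => ρ (g x) * deriv g x) :=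
    hpull.mul (.of_abs_log_sub_le hderiv_pos hdist) hderiv_pos
  refine ⟨hL, fun hϖ_large => hL.mono (add_le_of_div_one_sub_le ?_ hϖ_large)⟩
  exact rpow_lt_one_of_one_lt_of_neg hΛ (by norm_num)

/-- Cone contraction for the transfer operator
`(Lρ)(x) = ρ(g x) · g'(x)` along a contracting inverse branch `g` with
Hölder-1/3 log-derivative: if `ρ ∈ C(ϖ)`, then
`Lρ ∈ C(Λ₁^{-1/3} ϖ + Q₁)`; in particular for `ϖ ≥ Q₁/(1 − Λ₁^{-1/3})`
the cone `C(ϖ)` is invariant. -/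
theorem transfer_operator_cone_contraction
    (I J : Set ℝ) (g : ℝ → ℝ) (Q₁ Λ₁ ϖ : ℝ)
    (hQ : 0 < Q₁) (hΛ : 1 < Λ₁) (hϖ : 0 < ϖ)
    (hmap : Set.MapsTo g I J)
    (hdiff : ∀ x ∈ I, DifferentiableAt ℝ g x ∧ 0 < deriv g x)
    (hdist : ∀ x ∈ I, ∀ y ∈ I,
      |Real.log (deriv g x) - Real.log (deriv g y)| ≤ Q₁ * |x - y| ^ ((1:ℝ)/3))
    (hcontr : ∀ x ∈ I, ∀ y ∈ I, |g x - g y| ≤ Λ₁⁻¹ * |x - y|)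
    (ρ : ℝ → ℝ) (hρpos : ∀ y ∈ J, 0 < ρ y)
    (hρ : ∀ u ∈ J, ∀ v ∈ J, ρ u / ρ v ≤ Real.exp (ϖ * |u - v| ^ ((1:ℝ)/3))) :
    (∀ x ∈ I, ∀ y ∈ I,
        (ρ (g x) * deriv g x) / (ρ (g y) * deriv g y)
          ≤ Real.exp ((Λ₁ ^ (-(1:ℝ)/3) * ϖ + Q₁) * |x - y| ^ ((1:ℝ)/3))) ∧
      (Q₁ / (1 - Λ₁ ^ (-(1:ℝ)/3)) ≤ ϖ →
        ∀ x ∈ I, ∀ y ∈ I,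
          (ρ (g x) * deriv g x) / (ρ (g y) * deriv g y)
            ≤ Real.exp (ϖ * |x - y| ^ ((1:ℝ)/3))) :=
  transfer_operator_cone_contraction_general I J g Q₁ Λ₁ ϖ hΛ hϖ hmap hdiff hdist hcontr ρ hρ
end

section
/- Let ρ₁, ρ₂ : I → ℝ be positive probability densities on an interval I (∫_I ρ₁ = ∫_I ρ₂ = 1) with |ln(ρ₁(x)/ρ₂(x))| ≤ ε for all x ∈ I, where ε ∈ (0, 1/2). Define ρ* = (1 − 2ε)·min{ρ₁, ρ₂}, and ρ̂_i = ρ_i − ρ*. Then ρ* and ρ̂_i are nonnegative, ρ₁ = ρ* + ρ̂₁ and ρ₂ = ρ* + ρ̂₂, and ∫_I ρ* ≥ 1 − 4ε; moreover, for the leftover densities one has inf_I ρ̂_i ≥ ε·(1−2ε)·inf_I ρ_i and sup_I ρ̂_i ≤ (1 − (1−2ε)·e^{−ε})·sup_I ρ_i, so that sup ρ̂_i / inf ρ̂_i ≤ 3·(sup ρ_i/inf ρ_i) for ε small enough. -/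
open MeasureTheory

set_option maxHeartbeats 1000000

lemma ratio_aux (I : Set ℝ) (ρ f : ℝ → ℝ) (ε : ℝ) (hε : 0 < ε)
    (hpos : ∀ x ∈ I, 0 < ρ x) (hb : BddAbove (ρ '' I))
    (hlow : ∀ x ∈ I, 2*ε * ρ x ≤ f x) (hup : ∀ x ∈ I, f x ≤ 3*ε * ρ x) :
    sSup (f '' I) / sInf (f '' I) ≤ 3 * (sSup (ρ '' I) / sInf (ρ '' I)) := by
  rcases I.eq_empty_or_nonempty with rfl | ⟨x0, hx0⟩
  · simp [Real.sSup_empty, Real.sInf_empty]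
  have hne : (ρ '' I).Nonempty := ⟨_, ⟨x0, hx0, rfl⟩⟩
  have hnef : (f '' I).Nonempty := ⟨_, ⟨x0, hx0, rfl⟩⟩
  set m := sInf (ρ '' I) with hmdef
  set s := sSup (ρ '' I) with hsdef
  have hbbρ : BddBelow (ρ '' I) := ⟨0, by rintro _ ⟨x, hx, rfl⟩; exact (hpos x hx).le⟩
  have hbbf : BddBelow (f '' I) := ⟨0, by
    rintro _ ⟨x, hx, rfl⟩
    have := hlow x hx; have := hpos x hx; nlinarith⟩
  have hm0 : 0 ≤ m := le_csInf hne (by rintro _ ⟨x, hx, rfl⟩; exact (hpos x hx).le)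
  have hmle : ∀ x ∈ I, m ≤ ρ x := fun x hx => csInf_le hbbρ ⟨x, hx, rfl⟩
  have hsle : ∀ x ∈ I, ρ x ≤ s := fun x hx => le_csSup hb ⟨x, hx, rfl⟩
  have hs0 : 0 < s := lt_of_lt_of_le (hpos x0 hx0) (hsle x0 hx0)
  have hfub : sSup (f '' I) ≤ 3*ε*s := csSup_le hnef (by
    rintro _ ⟨x, hx, rfl⟩
    have h1 := hup x hx; have h2 := hsle x hx; nlinarith)
  have hflb : 2*ε*m ≤ sInf (f '' I) := le_csInf hnef (by
    rintro _ ⟨x, hx, rfl⟩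
    have h1 := hlow x hx; have h2 := hmle x hx; nlinarith)
  rcases eq_or_lt_of_le hm0 with hm | hm
  · have hf0 : sInf (f '' I) = 0 := by
      refine le_antisymm ?_ ?_
      · by_contra hc
        push_neg at hc
        have hkey : sInf (f '' I) / (3*ε) ≤ m := le_csInf hne (by
          rintro _ ⟨x, hx, rfl⟩
          have h1 : sInf (f '' I) ≤ f x := csInf_le hbbf ⟨x, hx, rfl⟩
          have h2 := hup x hx
          rw [div_le_iff₀ (by positivity)]
          nlinarith)
        rw [← hm] at hkey
        have : 0 < sInf (f '' I) / (3*ε) := by positivity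
        linarith
      · refine le_csInf hnef ?_
        rintro _ ⟨x, hx, rfl⟩
        have := hlow x hx; have := hpos x hx; nlinarith
    rw [hf0, ← hm]
    simp
  · have hinf_pos : 0 < sInf (f '' I) := lt_of_lt_of_le (by positivity) hflb
    have h1 : sSup (f '' I) / sInf (f '' I) ≤ (3*ε*s) / (2*ε*m) :=
      div_le_div₀ (by positivity) hfub (by positivity) hflb
    have h2 : (3*ε*s) / (2*ε*m) = (3/2) * (s/m) := by
      field_simp
    have h3 : 0 ≤ s/m := by positivity
    calc sSup (f '' I) / sInf (f '' I) ≤ (3*ε*s) / (2*ε*m) := h1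
      _ = (3/2) * (s/m) := h2
      _ ≤ 3 * (s/m) := by linarith

/-- Mismatch decomposition of two probability densities with
pointwise log-ratio at most `ε`: the common part
`ρ* = (1−2ε)·min{ρ₁,ρ₂}` and leftovers `ρ̂ᵢ = ρᵢ − ρ*` are nonnegative,
`∫ρ* ≥ 1 − 4ε`, the leftovers satisfy the stated two-sided pointwise bounds,
and for `ε` small enough the oscillation of the leftovers is at most `3` times
that of the original densities. -/
theorem mismatch_decomposition
    (I : Set ℝ) (hI : MeasurableSet I) (ε : ℝ) (hε : ε ∈ Set.Ioo (0:ℝ) (1/2))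
    (ρ₁ ρ₂ : ℝ → ℝ)
    (hpos₁ : ∀ x ∈ I, 0 < ρ₁ x) (hpos₂ : ∀ x ∈ I, 0 < ρ₂ x)
    (hint₁ : IntegrableOn ρ₁ I) (hint₂ : IntegrableOn ρ₂ I)
    (h1 : ∫ x in I, ρ₁ x = 1) (h2 : ∫ x in I, ρ₂ x = 1)
    (hlog : ∀ x ∈ I, |Real.log (ρ₁ x / ρ₂ x)| ≤ ε)
    (hb₁ : BddAbove (ρ₁ '' I)) (hb₂ : BddAbove (ρ₂ '' I)) :
    (∀ x ∈ I, 0 ≤ (1 - 2*ε) * min (ρ₁ x) (ρ₂ x)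
        ∧ 0 ≤ ρ₁ x - (1 - 2*ε) * min (ρ₁ x) (ρ₂ x)
        ∧ 0 ≤ ρ₂ x - (1 - 2*ε) * min (ρ₁ x) (ρ₂ x)) ∧
    (∀ x, ρ₁ x = (1 - 2*ε) * min (ρ₁ x) (ρ₂ x)
              + (ρ₁ x - (1 - 2*ε) * min (ρ₁ x) (ρ₂ x))
        ∧ ρ₂ x = (1 - 2*ε) * min (ρ₁ x) (ρ₂ x)
              + (ρ₂ x - (1 - 2*ε) * min (ρ₁ x) (ρ₂ x))) ∧
    (1 - 4*ε ≤ ∫ x in I, (1 - 2*ε) * min (ρ₁ x) (ρ₂ x)) ∧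
    (∀ x ∈ I,
        ε * (1 - 2*ε) * ρ₁ x ≤ ρ₁ x - (1 - 2*ε) * min (ρ₁ x) (ρ₂ x) ∧
        ρ₁ x - (1 - 2*ε) * min (ρ₁ x) (ρ₂ x)
            ≤ (1 - (1 - 2*ε) * Real.exp (-ε)) * ρ₁ x ∧
        ε * (1 - 2*ε) * ρ₂ x ≤ ρ₂ x - (1 - 2*ε) * min (ρ₁ x) (ρ₂ x) ∧
        ρ₂ x - (1 - 2*ε) * min (ρ₁ x) (ρ₂ x)
            ≤ (1 - (1 - 2*ε) * Real.exp (-ε)) * ρ₂ x) ∧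
    (ε ≤ 1/100 →
        sSup ((fun x => ρ₁ x - (1 - 2*ε) * min (ρ₁ x) (ρ₂ x)) '' I)
            / sInf ((fun x => ρ₁ x - (1 - 2*ε) * min (ρ₁ x) (ρ₂ x)) '' I)
          ≤ 3 * (sSup (ρ₁ '' I) / sInf (ρ₁ '' I)) ∧
        sSup ((fun x => ρ₂ x - (1 - 2*ε) * min (ρ₁ x) (ρ₂ x)) '' I)
            / sInf ((fun x => ρ₂ x - (1 - 2*ε) * min (ρ₁ x) (ρ₂ x)) '' I)
          ≤ 3 * (sSup (ρ₂ '' I) / sInf (ρ₂ '' I))) := by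
  obtain ⟨hε0, hε2⟩ := hε
  have hε2' : 0 < 1 - 2*ε := by linarith
  have hexp1 : 1 - ε ≤ Real.exp (-ε) := by
    have := Real.add_one_le_exp (-ε); linarith
  have hexp_pos : 0 < Real.exp (-ε) := Real.exp_pos _
  have hexp_le1 : Real.exp (-ε) ≤ 1 := by
    rw [Real.exp_le_one_iff]; linarith
  -- key pointwise bound
  have hmin : ∀ x ∈ I, Real.exp (-ε) * ρ₁ x ≤ min (ρ₁ x) (ρ₂ x)
      ∧ Real.exp (-ε) * ρ₂ x ≤ min (ρ₁ x) (ρ₂ x) := by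
    intro x hx
    have h1x := hpos₁ x hx; have h2x := hpos₂ x hx
    have hl := hlog x hx
    rw [abs_le] at hl
    have hrpos : 0 < ρ₁ x / ρ₂ x := by positivity
    have hq : ρ₁ x / ρ₂ x ≤ Real.exp ε := by
      calc ρ₁ x / ρ₂ x = Real.exp (Real.log (ρ₁ x / ρ₂ x)) := (Real.exp_log hrpos).symm
        _ ≤ Real.exp ε := Real.exp_le_exp.mpr hl.2
    have hq' : Real.exp (-ε) ≤ ρ₁ x / ρ₂ x := by
      calc Real.exp (-ε) ≤ Real.exp (Real.log (ρ₁ x / ρ₂ x)) :=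
            Real.exp_le_exp.mpr (by linarith [hl.1])
        _ = ρ₁ x / ρ₂ x := Real.exp_log hrpos
    have h12 : Real.exp (-ε) * ρ₂ x ≤ ρ₁ x := by
      rw [le_div_iff₀ h2x] at hq'; linarith
    have h21 : Real.exp (-ε) * ρ₁ x ≤ ρ₂ x := by
      rw [div_le_iff₀ h2x] at hq
      have hee : Real.exp (-ε) * Real.exp ε = 1 := by
        rw [← Real.exp_add]; simp
      nlinarith
    constructor
    · exact le_min (by nlinarith) h21
    · exact le_min h12 (by nlinarith)
  have hminle₁ : ∀ x, min (ρ₁ x) (ρ₂ x) ≤ ρ₁ x := fun x => min_le_left _ _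
  have hminle₂ : ∀ x, min (ρ₁ x) (ρ₂ x) ≤ ρ₂ x := fun x => min_le_right _ _
  refine ⟨?_, ?_, ?_, ?_, ?_⟩
  · intro x hx
    have h1x := hpos₁ x hx; have h2x := hpos₂ x hx
    have hm : 0 < min (ρ₁ x) (ρ₂ x) := lt_min h1x h2x
    refine ⟨by positivity, ?_, ?_⟩
    · nlinarith [hminle₁ x]
    · nlinarith [hminle₂ x]
  · intro x; constructor <;> ring
  · -- integral bound
    have hmin_int : IntegrableOn (fun x => min (ρ₁ x) (ρ₂ x)) I := by
      have h := hint₁.inf hint₂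
      have heq : (ρ₁ ⊓ ρ₂) = fun x => min (ρ₁ x) (ρ₂ x) := rfl
      rwa [heq] at h
    have hc : IntegrableOn (fun x => Real.exp (-ε) * ρ₁ x) I := hint₁.const_mul _
    have hle : Real.exp (-ε) ≤ ∫ x in I, min (ρ₁ x) (ρ₂ x) := by
      have hmono := setIntegral_mono_on hc hmin_int hI (fun x hx => (hmin x hx).1)
      rwa [integral_const_mul, h1, mul_one] at hmono
    have heq : ∫ x in I, (1 - 2*ε) * min (ρ₁ x) (ρ₂ x)
        = (1 - 2*ε) * ∫ x in I, min (ρ₁ x) (ρ₂ x) := integral_const_mul _ _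
    rw [heq]
    nlinarith
  · intro x hx
    have h1x := hpos₁ x hx; have h2x := hpos₂ x hx
    obtain ⟨hm1, hm2⟩ := hmin x hx
    have k1 : (1 - 2*ε) * min (ρ₁ x) (ρ₂ x) ≤ (1 - 2*ε) * ρ₁ x :=
      mul_le_mul_of_nonneg_left (hminle₁ x) hε2'.le
    have k2 : (1 - 2*ε) * min (ρ₁ x) (ρ₂ x) ≤ (1 - 2*ε) * ρ₂ x :=
      mul_le_mul_of_nonneg_left (hminle₂ x) hε2'.le
    have k3 : (1 - 2*ε) * (Real.exp (-ε) * ρ₁ x) ≤ (1 - 2*ε) * min (ρ₁ x) (ρ₂ x) :=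
      mul_le_mul_of_nonneg_left hm1 hε2'.le
    have k4 : (1 - 2*ε) * (Real.exp (-ε) * ρ₂ x) ≤ (1 - 2*ε) * min (ρ₁ x) (ρ₂ x) :=
      mul_le_mul_of_nonneg_left hm2 hε2'.le
    have p1 : 0 < ε * ρ₁ x * (1 + 2*ε) :=
      mul_pos (mul_pos hε0 h1x) (by linarith)
    have p2 : 0 < ε * ρ₂ x * (1 + 2*ε) :=
      mul_pos (mul_pos hε0 h2x) (by linarith)
    refine ⟨by nlinarith, by nlinarith, by nlinarith, by nlinarith⟩
  · intro _
    have hex3 : 1 - (1 - 2*ε) * Real.exp (-ε) ≤ 3*ε := by nlinarith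
    constructor
    · refine ratio_aux I ρ₁ _ ε hε0 hpos₁ hb₁ ?_ ?_
      · intro x hx
        have h1x := hpos₁ x hx
        nlinarith [hminle₁ x]
      · intro x hx
        have h1x := hpos₁ x hx
        have := (hmin x hx).1
        nlinarith
    · refine ratio_aux I ρ₂ _ ε hε0 hpos₂ hb₂ ?_ ?_
      · intro x hx
        have h2x := hpos₂ x hx
        nlinarith [hminle₂ x]
      · intro x hx
        have h2x := hpos₂ x hx
        have := (hmin x hx).2
        nlinarith
end

section
/- Let τ : I → ℝ be a C¹ function with τ ≥ τ_min > 0 on an interval I, and φ̄ : I → [−π/2, π/2] a differentiable function with φ̄'(r) = −cos(φ(r))/τ(r), where φ : I → (−π/2, π/2) is differentiable with |φ'| ≤ K, and cos φ ≥ c·|I|^{2/3} and cos φ̄ ≥ c'·|I|^{2/3} pointwise on I (c, c', K > 0). Then there is a constant C (depending only on τ_min, K, c, c', and ‖τ'‖_∞) such that for all r_a, r_b ∈ I: |ln cos φ̄(r_a) − ln cos φ̄(r_b)| ≤ C|r_a − r_b|^{1/3}, |ln cos φ(r_a) − ln cos φ(r_b)| ≤ C|r_a − r_b|^{1/3}, and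 |ln τ(r_a) − ln τ(r_b)| ≤ C|r_a − r_b|, so that the density ρ = cos φ̄ · cos φ/(2τ) satisfies ρ(r_a)/ρ(r_b) ≤ exp(3C|r_a − r_b|^{1/3}). -/
lemma holder_aux (a b : ℝ) (f f' : ℝ → ℝ) (L : ℝ)
    (hd : ∀ r ∈ Set.Icc a b, HasDerivAt f (f' r) r)
    (hb : ∀ r ∈ Set.Icc a b, |f' r| ≤ L)
    {ra rb : ℝ} (hra : ra ∈ Set.Icc a b) (hrb : rb ∈ Set.Icc a b) :
    |f ra - f rb| ≤ L * |ra - rb| := by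
  have := (convex_Icc a b).norm_image_sub_le_of_norm_hasDerivWithin_le
    (fun r hr => (hd r hr).hasDerivWithinAt)
    (fun r hr => by simpa [Real.norm_eq_abs] using hb r hr) hrb hra
  simpa [Real.norm_eq_abs] using this


/-- Technical cone estimate for the push-forward density of a
vertical line: there is a constant `C`, depending only on
`τ_min, K, c, c', M_τ`, such that on any interval `[a,b]` where
`φ̄' = −cos φ/τ`, `|φ'| ≤ K`, `τ ≥ τ_min`, `|τ'| ≤ M_τ`, and
`cos φ ≥ c(b−a)^{2/3}`, `cos φ̄ ≥ c'(b−a)^{2/3}`, the logarithms of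
`cos φ̄`, `cos φ` are Hölder-1/3 with constant `C`, `log τ` is Lipschitz with
constant `C`, and hence the density `ρ = cos φ̄ · cos φ/(2τ)` satisfies
`ρ(r_a)/ρ(r_b) ≤ exp(3C|r_a−r_b|^{1/3})`. -/
theorem vertical_line_density_cone
    (τmin K c c' Mτ : ℝ)
    (hτmin : 0 < τmin) (hK : 0 < K) (hc : 0 < c) (hc' : 0 < c') (hMτ : 0 < Mτ) :
    ∃ C > (0:ℝ), ∀ (a b : ℝ), a ≤ b → ∀ (τ τ' φ φ' φb : ℝ → ℝ),
      (∀ r ∈ Set.Icc a b, HasDerivAt τ (τ' r) r) →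
      (∀ r ∈ Set.Icc a b, |τ' r| ≤ Mτ) →
      (∀ r ∈ Set.Icc a b, τmin ≤ τ r) →
      (∀ r ∈ Set.Icc a b, HasDerivAt φ (φ' r) r) →
      (∀ r ∈ Set.Icc a b, |φ' r| ≤ K) →
      (∀ r ∈ Set.Icc a b, φ r ∈ Set.Ioo (-(Real.pi/2)) (Real.pi/2)) →
      (∀ r ∈ Set.Icc a b, HasDerivAt φb (-(Real.cos (φ r)) / τ r) r) →
      (∀ r ∈ Set.Icc a b, φb r ∈ Set.Icc (-(Real.pi/2)) (Real.pi/2)) →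
      (∀ r ∈ Set.Icc a b, c * (b - a) ^ ((2:ℝ)/3) ≤ Real.cos (φ r)) →
      (∀ r ∈ Set.Icc a b, c' * (b - a) ^ ((2:ℝ)/3) ≤ Real.cos (φb r)) →
      ∀ ra ∈ Set.Icc a b, ∀ rb ∈ Set.Icc a b,
        |Real.log (Real.cos (φb ra)) - Real.log (Real.cos (φb rb))|
            ≤ C * |ra - rb| ^ ((1:ℝ)/3) ∧
        |Real.log (Real.cos (φ ra)) - Real.log (Real.cos (φ rb))|
            ≤ C * |ra - rb| ^ ((1:ℝ)/3) ∧
        |Real.log (τ ra) - Real.log (τ rb)| ≤ C * |ra - rb| ∧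
        (Real.cos (φb ra) * Real.cos (φ ra) / (2 * τ ra))
              / (Real.cos (φb rb) * Real.cos (φ rb) / (2 * τ rb))
            ≤ Real.exp (3 * C * |ra - rb| ^ ((1:ℝ)/3)) := by
  refine ⟨K/c + 1/(τmin*c') + Mτ/τmin + Mτ/(τmin*c) + 1, by positivity, ?_⟩
  set C := K/c + 1/(τmin*c') + Mτ/τmin + Mτ/(τmin*c) + 1 with hC
  have hCpos : (0:ℝ) < C := by positivity
  have hn1 : (0:ℝ) ≤ K/c := by positivity
  have hn2 : (0:ℝ) ≤ 1/(τmin*c') := by positivity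
  have hn3 : (0:ℝ) ≤ Mτ/τmin := by positivity
  have hn4 : (0:ℝ) ≤ Mτ/(τmin*c) := by positivity
  have hC1 : K/c ≤ C := by rw [hC]; linarith
  have hC2 : 1/(τmin*c') ≤ C := by rw [hC]; linarith
  have hC3 : Mτ/τmin ≤ C := by rw [hC]; linarith
  have hC4 : Mτ/(τmin*c) ≤ C := by rw [hC]; linarith
  intro a b hab τ τ' φ φ' φb hτd hτ'b hτlb hφd hφ'b hφmem hφbd hφbmem hφlb hφblb
    ra hra rb hrb
  rcases eq_or_lt_of_le hab with heq | hlt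
  · -- a = b : trivial case
    subst heq
    have hra' : ra = a := le_antisymm hra.2 hra.1
    have hrb' : rb = a := le_antisymm hrb.2 hrb.1
    rw [hra', hrb']
    have h0 : |a - a| ^ ((1:ℝ)/3) = 0 := by
      simp [Real.zero_rpow (by norm_num : ((1:ℝ)/3) ≠ 0)]
    refine ⟨by simp [h0], by simp [h0], by simp, ?_⟩
    rw [h0]
    calc _ ≤ (1:ℝ) := div_self_le_one _
      _ = Real.exp (3 * C * 0) := by simp
  · -- a < b
    have hba : 0 < b - a := sub_pos.mpr hlt
    set h23 := (b - a) ^ ((2:ℝ)/3) with hh23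
    have h23pos : 0 < h23 := Real.rpow_pos_of_pos hba _
    -- pointwise positivity
    have hτpos : ∀ r ∈ Set.Icc a b, 0 < τ r := fun r hr => lt_of_lt_of_le hτmin (hτlb r hr)
    have hcosφpos : ∀ r ∈ Set.Icc a b, 0 < Real.cos (φ r) := fun r hr =>
      lt_of_lt_of_le (by positivity) (hφlb r hr)
    have hcosφbpos : ∀ r ∈ Set.Icc a b, 0 < Real.cos (φb r) := fun r hr =>
      lt_of_lt_of_le (by positivity) (hφblb r hr)
    -- |ra - rb| ≤ b - a
    have habs : |ra - rb| ≤ b - a := by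
      rw [abs_le]; constructor <;> [linarith [hra.1, hrb.2]; linarith [hra.2, hrb.1]]
    set t := |ra - rb| ^ ((1:ℝ)/3) with ht
    have htnn : 0 ≤ t := Real.rpow_nonneg (abs_nonneg _) _
    -- |ra - rb| ≤ h23 * t
    have key2 : |ra - rb| ≤ h23 * t := by
      have e1 : |ra - rb| = |ra - rb| ^ ((2:ℝ)/3) * t := by
        rw [ht, ← Real.rpow_add' (abs_nonneg _) (by norm_num)]
        norm_num
      rw [e1]
      exact mul_le_mul_of_nonneg_right
        (Real.rpow_le_rpow (abs_nonneg _) habs (by norm_num)) htnn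
    -- h23 ≤ 1/c
    have hamem : a ∈ Set.Icc a b := ⟨le_refl _, hab⟩
    have h23le : h23 ≤ 1/c := by
      have h1 : c * h23 ≤ Real.cos (φ a) := hφlb a hamem
      have h2 : Real.cos (φ a) ≤ 1 := Real.cos_le_one _
      rw [le_div_iff₀ hc]; linarith
    -- Derivative data for F1 = log ∘ cos ∘ φb
    have hd1 : ∀ r ∈ Set.Icc a b, HasDerivAt (fun r => Real.log (Real.cos (φb r)))
        ((-Real.sin (φb r) * (-(Real.cos (φ r)) / τ r)) / Real.cos (φb r)) r :=
      fun r hr => ((hφbd r hr).cos).log (ne_of_gt (hcosφbpos r hr))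
    have hb1 : ∀ r ∈ Set.Icc a b,
        |(-Real.sin (φb r) * (-(Real.cos (φ r)) / τ r)) / Real.cos (φb r)|
          ≤ (1/τmin) / (c' * h23) := by
      intro r hr
      have hτr := hτpos r hr
      have hnum : |(-Real.sin (φb r)) * (-(Real.cos (φ r)) / τ r)| ≤ 1/τmin := by
        rw [abs_mul, abs_neg, abs_div, abs_neg,
          abs_of_pos (hcosφpos r hr), abs_of_pos hτr]
        have h1 : |Real.sin (φb r)| ≤ 1 := Real.abs_sin_le_one _
        have h2 : Real.cos (φ r) / τ r ≤ 1/τmin := by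
          apply div_le_div₀ (by positivity) (Real.cos_le_one _) hτmin (hτlb r hr)
        have h3 : (0:ℝ) ≤ Real.cos (φ r) / τ r :=
          div_nonneg (hcosφpos r hr).le (hτpos r hr).le
        calc |Real.sin (φb r)| * (Real.cos (φ r) / τ r) ≤ 1 * (1/τmin) := by
              apply mul_le_mul h1 h2 h3 zero_le_one
          _ = 1/τmin := one_mul _
      rw [abs_div]
      apply div_le_div₀ (by positivity) hnum (mul_pos hc' h23pos)
      rw [abs_of_pos (hcosφbpos r hr)]
      exact hφblb r hr
    -- Derivative data for F2 = log ∘ cos ∘ φ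
    have hd2 : ∀ r ∈ Set.Icc a b, HasDerivAt (fun r => Real.log (Real.cos (φ r)))
        ((-Real.sin (φ r) * φ' r) / Real.cos (φ r)) r :=
      fun r hr => ((hφd r hr).cos).log (ne_of_gt (hcosφpos r hr))
    have hb2 : ∀ r ∈ Set.Icc a b,
        |(-Real.sin (φ r) * φ' r) / Real.cos (φ r)| ≤ K / (c * h23) := by
      intro r hr
      have hnum : |(-Real.sin (φ r)) * φ' r| ≤ K := by
        rw [abs_mul, abs_neg]
        calc |Real.sin (φ r)| * |φ' r| ≤ 1 * K :=
              mul_le_mul (Real.abs_sin_le_one _) (hφ'b r hr) (abs_nonneg _) zero_le_one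
          _ = K := one_mul _
      rw [abs_div]
      apply div_le_div₀ (le_of_lt hK) hnum (mul_pos hc h23pos)
      rw [abs_of_pos (hcosφpos r hr)]
      exact hφlb r hr
    -- Derivative data for F3 = log ∘ τ
    have hd3 : ∀ r ∈ Set.Icc a b, HasDerivAt (fun r => Real.log (τ r))
        (τ' r / τ r) r :=
      fun r hr => (hτd r hr).log (ne_of_gt (hτpos r hr))
    have hb3 : ∀ r ∈ Set.Icc a b, |τ' r / τ r| ≤ Mτ / τmin := by
      intro r hr
      rw [abs_div]
      apply div_le_div₀ (le_of_lt hMτ) (hτ'b r hr) hτmin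
      rw [abs_of_pos (hτpos r hr)]
      exact hτlb r hr
    -- Hölder bounds
    have H1 : |Real.log (Real.cos (φb ra)) - Real.log (Real.cos (φb rb))| ≤ C * t := by
      calc _ ≤ (1/τmin) / (c' * h23) * |ra - rb| := holder_aux a b _ _ _ hd1 hb1 hra hrb
        _ ≤ (1/τmin) / (c' * h23) * (h23 * t) :=
            mul_le_mul_of_nonneg_left key2
              (div_nonneg (by positivity) (le_of_lt (mul_pos hc' h23pos)))
        _ = 1/(τmin*c') * t := by
            field_simp [ne_of_gt hτmin, ne_of_gt hc', ne_of_gt h23pos]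
        _ ≤ C * t := mul_le_mul_of_nonneg_right hC2 htnn
    have H2 : |Real.log (Real.cos (φ ra)) - Real.log (Real.cos (φ rb))| ≤ C * t := by
      calc _ ≤ K / (c * h23) * |ra - rb| := holder_aux a b _ _ _ hd2 hb2 hra hrb
        _ ≤ K / (c * h23) * (h23 * t) :=
            mul_le_mul_of_nonneg_left key2
              (div_nonneg (le_of_lt hK) (le_of_lt (mul_pos hc h23pos)))
        _ = K/c * t := by
            field_simp [ne_of_gt hc, ne_of_gt h23pos]
        _ ≤ C * t := mul_le_mul_of_nonneg_right hC1 htnn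
    have H3 : |Real.log (τ ra) - Real.log (τ rb)| ≤ Mτ/τmin * |ra - rb| :=
      holder_aux a b _ _ _ hd3 hb3 hra hrb
    have H3' : |Real.log (τ ra) - Real.log (τ rb)| ≤ C * |ra - rb| :=
      le_trans H3 (mul_le_mul_of_nonneg_right hC3 (abs_nonneg _))
    -- log τ bound in terms of t
    have H3t : |Real.log (τ ra) - Real.log (τ rb)| ≤ C * t := by
      calc _ ≤ Mτ/τmin * |ra - rb| := H3
        _ ≤ Mτ/τmin * (h23 * t) := mul_le_mul_of_nonneg_left key2 hn3
        _ ≤ Mτ/τmin * (1/c * t) := mul_le_mul_of_nonneg_left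
            (mul_le_mul_of_nonneg_right h23le htnn) hn3
        _ = Mτ/(τmin*c) * t := by
            rw [← mul_assoc, div_mul_div_comm, mul_one]
        _ ≤ C * t := mul_le_mul_of_nonneg_right hC4 htnn
    refine ⟨H1, H2, H3', ?_⟩
    -- final ratio bound
    have hρa : (0:ℝ) < Real.cos (φb ra) * Real.cos (φ ra) / (2 * τ ra) :=
      div_pos (mul_pos (hcosφbpos ra hra) (hcosφpos ra hra))
        (mul_pos two_pos (hτpos ra hra))
    have hρb : (0:ℝ) < Real.cos (φb rb) * Real.cos (φ rb) / (2 * τ rb) :=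
      div_pos (mul_pos (hcosφbpos rb hrb) (hcosφpos rb hrb))
        (mul_pos two_pos (hτpos rb hrb))
    have hlogρ : ∀ r ∈ Set.Icc a b,
        Real.log (Real.cos (φb r) * Real.cos (φ r) / (2 * τ r))
          = Real.log (Real.cos (φb r)) + Real.log (Real.cos (φ r))
            - (Real.log 2 + Real.log (τ r)) := by
      intro r hr
      rw [Real.log_div (ne_of_gt (mul_pos (hcosφbpos r hr) (hcosφpos r hr)))
          (ne_of_gt (mul_pos two_pos (hτpos r hr))),
        Real.log_mul (ne_of_gt (hcosφbpos r hr)) (ne_of_gt (hcosφpos r hr)),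
        Real.log_mul (by norm_num) (ne_of_gt (hτpos r hr))]
    have key : Real.log (Real.cos (φb ra) * Real.cos (φ ra) / (2 * τ ra))
        - Real.log (Real.cos (φb rb) * Real.cos (φ rb) / (2 * τ rb)) ≤ 3 * C * t := by
      rw [hlogρ ra hra, hlogρ rb hrb]
      have e1 := abs_le.mp H1
      have e2 := abs_le.mp H2
      have e3 := abs_le.mp H3t
      linarith [e1.1, e1.2, e2.1, e2.2, e3.1, e3.2]
    calc (Real.cos (φb ra) * Real.cos (φ ra) / (2 * τ ra))
          / (Real.cos (φb rb) * Real.cos (φ rb) / (2 * τ rb))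
        = Real.exp (Real.log (Real.cos (φb ra) * Real.cos (φ ra) / (2 * τ ra))
            - Real.log (Real.cos (φb rb) * Real.cos (φ rb) / (2 * τ rb))) := by
          rw [Real.exp_sub, Real.exp_log hρa, Real.exp_log hρb]
      _ ≤ Real.exp (3 * C * t) := Real.exp_le_exp.mpr key
end
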